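/- In the example self-similar groupoid action (G,E) generated by the partial isomorphisms a, b, c, the isotropy group G_u^u = {g ∈ G : d(g) = t(g) = u} is infinite cyclic, generated by a⁻¹cba; in particular, (a⁻¹cba)^n ≠ id_u for every nonzero integer n, so G_u^u is isomorphic to ℤ. -/

import Mathlib

attribute [local instance] Classical.propDecidable

/-- A directed graph `E = (E⁰, E¹, r, s)`. -/
structure DGraph where
  V : Type
  Edge : Type
  r : Edge → V
  s : Edge → V

/-- `E.chain v l w` says that the list of edges `l` forms a path with range `v`
and source `w`: consecutive edges satisfy `r e_{i+1} = s e_i`. -/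
def DGraph.chain (E : DGraph) : E.V → List E.Edge → E.V → Prop
  | v, [], w => v = w
  | v, e :: l, w => E.r e = v ∧ E.chain (E.s e) l w

theorem DGraph.chain_append (E : DGraph) :
    ∀ (l₁ : List E.Edge) (v w x : E.V) (l₂ : List E.Edge),
      E.chain v l₁ w → E.chain w l₂ x → E.chain v (l₁ ++ l₂) x := by
  intro l₁
  induction l₁ with
  | nil =>
      intro v w x l₂ h1 h2
      have hvw : v = w := h1
      rw [List.nil_append]
      exact hvw ▸ h2
  | cons e l ih =>
      intro v w x l₂ h1 h2
      have h1' : E.r e = v ∧ E.chain (E.s e) l w := h1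
      exact ⟨h1'.1, ih _ _ _ _ h1'.2 h2⟩

/-- A finite path in the graph `E`: a range vertex `r μ`, a compatible list of
edges, and a source vertex `s μ`.  Vertices are the paths with no edges. -/
structure Pth (E : DGraph) where
  rng : E.V
  edges : List E.Edge
  src : E.V
  ok : E.chain rng edges src

/-- The length-zero path at a vertex `v`. -/
def Pth.ofVertex {E : DGraph} (v : E.V) : Pth E := ⟨v, [], v, rfl⟩

/-- The length-one path given by an edge `e`. -/
def Pth.ofEdge {E : DGraph} (e : E.Edge) : Pth E :=
  ⟨E.r e, [e], E.s e, ⟨rfl, rfl⟩⟩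

/-- Concatenation `μ ν` of paths (meaningful when `r ν = s μ`; junk otherwise). -/
noncomputable def Pth.concat {E : DGraph} (μ ν : Pth E) : Pth E :=
  if h : ν.rng = μ.src then
    ⟨μ.rng, μ.edges ++ ν.edges, ν.src,
      E.chain_append μ.edges μ.rng μ.src ν.src ν.edges μ.ok (h ▸ ν.ok)⟩
  else μ

/-- A (discrete) groupoid with unit space `V`: `d` and `t` are the domain and
terminus maps, `unit v = id_v`, and a pair `(g, h)` is composable when `d g = t h`. -/
structure VGroupoid (V : Type) (α : Type*) where
  d : α → V
  t : α → V
  mul : α → α → α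
  inv : α → α
  unit : V → α
  d_unit : ∀ v, d (unit v) = v
  t_unit : ∀ v, t (unit v) = v
  d_inv : ∀ g, d (inv g) = t g
  t_inv : ∀ g, t (inv g) = d g
  d_mul : ∀ g h, d g = t h → d (mul g h) = d h
  t_mul : ∀ g h, d g = t h → t (mul g h) = t g
  mul_assoc : ∀ g h k, d g = t h → d h = t k → mul (mul g h) k = mul g (mul h k)
  unit_mul : ∀ g, mul (unit (t g)) g = g
  mul_unit : ∀ g, mul g (unit (d g)) = g
  inv_mul : ∀ g, mul (inv g) g = unit (d g)
  mul_inv : ∀ g, mul g (inv g) = unit (t g)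
  inv_inv : ∀ g, inv (inv g) = g

/-- A self-similar groupoid action `(G, E)` on the path space of the graph `E`:
a groupoid `G` with unit space `E⁰` together with a faithful action by partial
isomorphisms of the forest `T_E` — each `g ∈ G` maps `d(g) E*` bijectively onto
`t(g) E*` preserving path length, sending vertices to vertices and preserving the
edge relation of `T_E` — such that for every `g ∈ G` and every edge
`e ∈ d(g) E¹` there is a unique restriction `g|_e ∈ G` with
`g · (e μ) = (g · e)(g|_e · μ)` for all `μ ∈ s(e) E*`. -/
structure SelfSimilar (E : DGraph) (α : Type*) extends VGroupoid E.V α where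
  act : α → Pth E → Pth E
  act_rng : ∀ g μ, μ.rng = d g → (act g μ).rng = t g
  act_len : ∀ g μ, μ.rng = d g → (act g μ).edges.length = μ.edges.length
  act_vertex : ∀ g, act g (Pth.ofVertex (d g)) = Pth.ofVertex (t g)
  act_mul : ∀ g h μ, d g = t h → μ.rng = d h → act (mul g h) μ = act g (act h μ)
  act_unit : ∀ v μ, μ.rng = v → act (unit v) μ = μ
  act_surj : ∀ g ν, ν.rng = t g → ∃ μ, μ.rng = d g ∧ act g μ = ν
  act_edge : ∀ g μ e, μ.rng = d g → E.r e = μ.src →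
      ∃ e' : E.Edge, act g (μ.concat (Pth.ofEdge e)) = (act g μ).concat (Pth.ofEdge e')
  faithful : ∀ g₁ g₂, d g₁ = d g₂ → (∀ μ, μ.rng = d g₁ → act g₁ μ = act g₂ μ) → g₁ = g₂
  res : α → E.Edge → α
  res_d : ∀ g e, E.r e = d g → d (res g e) = E.s e
  res_spec : ∀ g e μ, E.r e = d g → μ.rng = E.s e →
      act g ((Pth.ofEdge e).concat μ) = (act g (Pth.ofEdge e)).concat (act (res g e) μ)
  res_unique : ∀ g e k, E.r e = d g → d k = E.s e →
      (∀ μ, μ.rng = E.s e →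
        act g ((Pth.ofEdge e).concat μ) = (act g (Pth.ofEdge e)).concat (act k μ)) →
      k = res g e

/-- The example graph: vertices `u = 0`, `v = 1`, `w = 2` and edges
`e₁ = 0, …, e₆ = 5` with `r e₁ = s e₁ = u`; `r e₂ = v`, `s e₂ = u`; `r e₃ = u`,
`s e₃ = v`; `r e₄ = r e₅ = w`, `s e₄ = s e₅ = v`; `r e₆ = v`, `s e₆ = w`. -/
abbrev exGraph : DGraph where
  V := Fin 3
  Edge := Fin 6
  r := ![0, 1, 0, 2, 2, 1]
  s := ![0, 0, 1, 1, 1, 2]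

/-!
Put `z = a⁻¹cba ∈ G_u^u`. Unwinding the recursions, `z · (e₁μ) = e₃(a · μ)` and
`z · (e₃(a · μ)) = e₁(z · μ)`, so `z` swaps `e₁` and `e₃` while `z²` fixes `e₁` with restriction
`z`. Hence every odd power of `z` moves `e₁`, and `z^(2m) = 1` forces `z^m = 1` by faithfulness:
`z` has infinite order.

Conjugating by the arrows `id_u : u → u`, `a : u → v` and `ba : u → w` is a functor from `G` onto
`G_u^u` fixing `G_u^u`. It sends `a` and `b` to `1` and `c` to `z`, so, as `a, b, c` generate
`G`, its image `G_u^u` is generated by `z`.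
-/

namespace Pth

variable {E : DGraph}

theorem ext {μ ν : Pth E} (h_rng : μ.rng = ν.rng) (h_edges : μ.edges = ν.edges)
    (h_src : μ.src = ν.src) : μ = ν := by
  cases μ; cases ν; cases h_rng; cases h_edges; cases h_src; rfl

theorem rng_concat {μ ν : Pth E} (h : ν.rng = μ.src) : (μ.concat ν).rng = μ.rng := by
  rw [concat, dif_pos h]

theorem edges_concat {μ ν : Pth E} (h : ν.rng = μ.src) :
    (μ.concat ν).edges = μ.edges ++ ν.edges := by
  rw [concat, dif_pos h]

theorem src_concat {μ ν : Pth E} (h : ν.rng = μ.src) : (μ.concat ν).src = ν.src := by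
  rw [concat, dif_pos h]

theorem concat_ofVertex_src (μ : Pth E) : μ.concat (ofVertex μ.src) = μ :=
  ext (rng_concat rfl) ((edges_concat rfl).trans (List.append_nil _)) (src_concat rfl)

theorem ofEdge_concat_inj (e : E.Edge) {μ ν : Pth E} (hμ : μ.rng = E.s e)
    (hν : ν.rng = E.s e) (h : (ofEdge e).concat μ = (ofEdge e).concat ν) : μ = ν := by
  have h_edges := congrArg edges h
  have h_src := congrArg src h
  rw [edges_concat hμ, edges_concat hν] at h_edges
  rw [src_concat hμ, src_concat hν] at h_src
  exact ext (hμ.trans hν.symm) (List.append_cancel_left h_edges) h_src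

end Pth

namespace VGroupoid

variable {V : Type} {α : Type*} (S : VGroupoid V α)

theorem unit_mul_of_eq {g : α} {v : V} (h : S.t g = v) : S.mul (S.unit v) g = g := by
  rw [← h]; exact S.unit_mul g

theorem mul_unit_of_eq {g : α} {v : V} (h : S.d g = v) : S.mul g (S.unit v) = g := by
  rw [← h]; exact S.mul_unit g

@[ext]
structure Isotropy (v : V) where
  val : α
  d_val : S.d val = v
  t_val : S.t val = v

instance (v : V) : Group (S.Isotropy v) where
  mul g h := ⟨S.mul g.val h.val,
    (S.d_mul _ _ (g.d_val.trans h.t_val.symm)).trans h.d_val,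
    (S.t_mul _ _ (g.d_val.trans h.t_val.symm)).trans g.t_val⟩
  one := ⟨S.unit v, S.d_unit v, S.t_unit v⟩
  inv g := ⟨S.inv g.val, (S.d_inv _).trans g.t_val, (S.t_inv _).trans g.d_val⟩
  mul_assoc g h k :=
    Isotropy.ext (S.mul_assoc _ _ _ (g.d_val.trans h.t_val.symm) (h.d_val.trans k.t_val.symm))
  one_mul g := Isotropy.ext (S.unit_mul_of_eq g.t_val)
  mul_one g := Isotropy.ext (S.mul_unit_of_eq g.d_val)
  inv_mul_cancel g := Isotropy.ext ((S.inv_mul g.val).trans (congrArg S.unit g.d_val))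

variable {S}

theorem Isotropy.val_injective {v : V} :
    Function.Injective (Isotropy.val : S.Isotropy v → α) :=
  fun _ _ => Isotropy.ext

theorem Isotropy.val_mul {v : V} (g h : S.Isotropy v) :
    (g * h).val = S.mul g.val h.val := rfl

theorem inv_unit (v : V) : S.inv (S.unit v) = S.unit v := by
  have h := S.mul_unit (S.inv (S.unit v))
  rw [S.d_inv, S.t_unit, S.inv_mul, S.d_unit] at h
  exact h.symm

theorem mul_inv_cancel_left {g k : α} (h : S.t g = S.t k) :
    S.mul g (S.mul (S.inv g) k) = k := by
  rw [← S.mul_assoc _ _ _ (S.t_inv g).symm ((S.d_inv g).trans h), S.mul_inv, h, S.unit_mul]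

structure Transversal (S : VGroupoid V α) (u : V) where
  arrow : V → α
  d_arrow : ∀ v, S.d (arrow v) = u
  t_arrow : ∀ v, S.t (arrow v) = v

namespace Transversal

variable {u : V} (T : S.Transversal u)

/-- Conjugation by the chosen arrows out of `u`: a functor from `S` onto its isotropy group
at `u`. -/
def retract (x : α) : S.Isotropy u :=
  have hx : S.d x = S.t (T.arrow (S.d x)) := (T.t_arrow _).symm
  have hinv : S.d (S.inv (T.arrow (S.t x))) = S.t (S.mul x (T.arrow (S.d x))) := by
    rw [S.d_inv, T.t_arrow, S.t_mul _ _ hx]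
  ⟨S.mul (S.inv (T.arrow (S.t x))) (S.mul x (T.arrow (S.d x))),
    by rw [S.d_mul _ _ hinv, S.d_mul _ _ hx, T.d_arrow],
    by rw [S.t_mul _ _ hinv, S.t_inv, T.d_arrow]⟩

theorem retract_val (x : α) :
    (T.retract x).val = S.mul (S.inv (T.arrow (S.t x))) (S.mul x (T.arrow (S.d x))) := rfl

theorem retract_eq_one {x : α} (h : S.mul x (T.arrow (S.d x)) = T.arrow (S.t x)) :
    T.retract x = 1 := by
  apply Isotropy.ext
  rw [retract_val, ← h, S.inv_mul, S.d_mul _ _ (T.t_arrow _).symm, T.d_arrow]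
  rfl

theorem retract_unit (v : V) : T.retract (S.unit v) = 1 :=
  T.retract_eq_one (by rw [S.d_unit, S.t_unit, S.unit_mul_of_eq (T.t_arrow v)])

theorem retract_mul {x y : α} (hxy : S.d x = S.t y) :
    T.retract (S.mul x y) = T.retract x * T.retract y := by
  apply Isotropy.ext
  set P := T.arrow
  have hx : S.d x = S.t (P (S.t y)) := hxy.trans (T.t_arrow _).symm
  have hy : S.d y = S.t (P (S.d y)) := (T.t_arrow _).symm
  have hyP : S.t (S.mul (S.inv (P (S.t y))) (S.mul y (P (S.d y)))) = u := by
    rw [S.t_mul _ _ (by rw [S.d_inv, T.t_arrow, S.t_mul _ _ hy]), S.t_inv, T.d_arrow]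
  rw [Isotropy.val_mul, retract_val, retract_val, retract_val, S.d_mul _ _ hxy,
    S.t_mul _ _ hxy, hxy, S.mul_assoc x y _ hxy hy,
    S.mul_assoc (S.inv (P (S.t x))) (S.mul x (P (S.t y))) _
      (by rw [S.d_inv, T.t_arrow, S.t_mul _ _ hx]) (by rw [S.d_mul _ _ hx, T.d_arrow, hyP]),
    S.mul_assoc x (P (S.t y)) _ hx (by rw [T.d_arrow, hyP]),
    S.mul_inv_cancel_left (by rw [T.t_arrow, S.t_mul _ _ hy])]

theorem retract_inv (x : α) : T.retract (S.inv x) = (T.retract x)⁻¹ := by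
  refine eq_inv_of_mul_eq_one_left ?_
  rw [← T.retract_mul (S.d_inv x), S.inv_mul, T.retract_unit]

theorem retract_of_mem {g : α} (hd : S.d g = u) (ht : S.t g = u)
    (hu : T.arrow u = S.unit u) : (T.retract g).val = g := by
  rw [retract_val, hd, ht, hu, inv_unit, S.mul_unit_of_eq hd, S.unit_mul_of_eq ht]

end Transversal

end VGroupoid

namespace SelfSimilar

open VGroupoid

variable {E : DGraph} {α : Type*} (S : SelfSimilar E α)

theorem act_inv_act {g : α} {μ : Pth E} (h : μ.rng = S.d g) :
    S.act (S.inv g) (S.act g μ) = μ := by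
  rw [← S.act_mul _ _ _ (S.d_inv g) h, S.inv_mul, S.act_unit _ _ h]

variable {S} {v : E.V}

theorem rng_act_isotropy (g : S.Isotropy v) {μ : Pth E} (hμ : μ.rng = v) :
    (S.act g.val μ).rng = v :=
  (S.act_rng _ _ (hμ.trans g.d_val.symm)).trans g.t_val

theorem act_isotropy_mul (g h : S.Isotropy v) {μ : Pth E} (hμ : μ.rng = v) :
    S.act (g * h).val μ = S.act g.val (S.act h.val μ) :=
  S.act_mul _ _ _ (g.d_val.trans h.t_val.symm) (hμ.trans h.d_val.symm)

theorem act_isotropy_one {μ : Pth E} (hμ : μ.rng = v) :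
    S.act (1 : S.Isotropy v).val μ = μ :=
  S.act_unit v μ hμ

theorem act_isotropy_ofVertex (g : S.Isotropy v) :
    S.act g.val (Pth.ofVertex v) = Pth.ofVertex v := by
  have h := S.act_vertex g.val
  rwa [g.d_val, g.t_val] at h

variable (S) in
/-- `g · e = e` and `g|_e = h`. -/
def FixesWithRestriction (e : E.Edge) (g h : S.Isotropy v) : Prop :=
  ∀ μ : Pth E, μ.rng = v →
    S.act g.val ((Pth.ofEdge e).concat μ) = (Pth.ofEdge e).concat (S.act h.val μ)

namespace FixesWithRestriction

variable {e : E.Edge}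

theorem one (hr : E.r e = v) (hs : E.s e = v) :
    S.FixesWithRestriction e (1 : S.Isotropy v) 1 := by
  intro μ hμ
  rw [act_isotropy_one hμ, act_isotropy_one ((Pth.rng_concat (hμ.trans hs.symm)).trans hr)]

theorem mul (hr : E.r e = v) (hs : E.s e = v) {g h g' h' : S.Isotropy v}
    (H : S.FixesWithRestriction e g h) (H' : S.FixesWithRestriction e g' h') :
    S.FixesWithRestriction e (g * g') (h * h') := by
  intro μ hμ
  rw [act_isotropy_mul _ _ ((Pth.rng_concat (hμ.trans hs.symm)).trans hr), H' μ hμ,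
    H _ (rng_act_isotropy h' hμ), act_isotropy_mul _ _ hμ]

theorem pow (hr : E.r e = v) (hs : E.s e = v) {g h : S.Isotropy v}
    (H : S.FixesWithRestriction e g h) (n : ℕ) : S.FixesWithRestriction e (g ^ n) (h ^ n) := by
  induction n with
  | zero => exact one hr hs
  | succ n ih => rw [pow_succ, pow_succ]; exact ih.mul hr hs H

theorem act_ofEdge (hs : E.s e = v) {g h : S.Isotropy v} (H : S.FixesWithRestriction e g h) :
    S.act g.val (Pth.ofEdge e) = Pth.ofEdge e := by
  have hsrc : (Pth.ofEdge e).concat (Pth.ofVertex v) = Pth.ofEdge e := by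
    rw [← hs]; exact Pth.concat_ofVertex_src _
  have hvertex := H (Pth.ofVertex v) rfl
  rwa [act_isotropy_ofVertex, hsrc] at hvertex

theorem eq_one (hr : E.r e = v) (hs : E.s e = v) {h : S.Isotropy v}
    (H : S.FixesWithRestriction e 1 h) : h = 1 := by
  refine Isotropy.ext (S.faithful _ _ (h.d_val.trans (S.d_unit v).symm) fun μ hμ => ?_)
  have hμv : μ.rng = v := hμ.trans h.d_val
  rw [act_isotropy_one hμv]
  refine Pth.ofEdge_concat_inj e ((rng_act_isotropy h hμv).trans hs.symm) (hμv.trans hs.symm) ?_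
  rw [← H μ hμv, act_isotropy_one ((Pth.rng_concat (hμv.trans hs.symm)).trans hr)]

end FixesWithRestriction

/-- An odd power of `g` moves `e` as `g` does, and `g ^ (2 * m) = 1` forces `g ^ m = 1`. -/
theorem not_isOfFinOrder_of_fixesWithRestriction_sq {e : E.Edge} (hr : E.r e = v)
    (hs : E.s e = v) {g : S.Isotropy v} (hsq : S.FixesWithRestriction e (g * g) g)
    (hmove : S.act g.val (Pth.ofEdge e) ≠ Pth.ofEdge e) : ¬IsOfFinOrder g := by
  intro hfin
  have hsq_pow : ∀ m : ℕ, S.FixesWithRestriction e (g ^ (2 * m)) (g ^ m) := fun m => by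
    simpa only [pow_mul, sq] using hsq.pow hr hs m
  have he : (Pth.ofEdge e).rng = v := hr
  obtain ⟨m, hm | hm⟩ := Nat.even_or_odd' (orderOf g)
  · have hm_pos : 0 < m := by have := hfin.orderOf_pos; omega
    have hfix := hsq_pow m
    rw [← hm, pow_orderOf_eq_one] at hfix
    exact pow_ne_one_of_lt_orderOf (x := g) hm_pos.ne' (by omega) (hfix.eq_one hr hs)
  · apply hmove
    have hone := congrArg (fun x : S.Isotropy v => S.act x.val (Pth.ofEdge e))
      (pow_orderOf_eq_one g)
    simp only [hm, pow_succ', act_isotropy_mul _ _ he, (hsq_pow m).act_ofEdge hs,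
      act_isotropy_one he] at hone
    exact hone

end SelfSimilar

section Example

local notation "e₁" => Pth.ofEdge (E := exGraph) 0
local notation "e₂" => Pth.ofEdge (E := exGraph) 1
local notation "e₃" => Pth.ofEdge (E := exGraph) 2
local notation "e₄" => Pth.ofEdge (E := exGraph) 3
local notation "e₅" => Pth.ofEdge (E := exGraph) 4
local notation "e₆" => Pth.ofEdge (E := exGraph) 5

structure IsExampleGenerators {α : Type*} (S : SelfSimilar exGraph α) (a b c : α) : Prop where
  d_a : S.d a = 0
  t_a : S.t a = 1
  d_b : S.d b = 1
  t_b : S.t b = 2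
  d_c : S.d c = 2
  t_c : S.t c = 1
  act_a_e₁ : ∀ μ : Pth exGraph, μ.rng = 0 →
    S.act a (Pth.concat e₁ μ) = Pth.concat e₂ μ
  act_a_e₃ : ∀ μ : Pth exGraph, μ.rng = 1 →
    S.act a (Pth.concat e₃ μ) = Pth.concat e₆ (S.act b μ)
  act_b_e₂ : ∀ μ : Pth exGraph, μ.rng = 0 →
    S.act b (Pth.concat e₂ μ) = Pth.concat e₅ (S.act a μ)
  act_b_e₆ : ∀ μ : Pth exGraph, μ.rng = 2 →
    S.act b (Pth.concat e₆ μ) = Pth.concat e₄ (S.act c μ)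
  act_c_e₄ : ∀ μ : Pth exGraph, μ.rng = 1 →
    S.act c (Pth.concat e₄ μ) = Pth.concat e₂ (S.act (S.inv a) μ)
  act_c_e₅ : ∀ μ : Pth exGraph, μ.rng = 1 →
    S.act c (Pth.concat e₅ μ) = Pth.concat e₆ (S.act b μ)

namespace IsExampleGenerators

open VGroupoid SelfSimilar

variable {α : Type*} {S : SelfSimilar exGraph α} {a b c : α}

theorem d_b_eq_t_a (H : IsExampleGenerators S a b c) : S.d b = S.t a :=
  H.d_b.trans H.t_a.symm

theorem d_mul_b_a (H : IsExampleGenerators S a b c) : S.d (S.mul b a) = 0 := by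
  rw [S.d_mul _ _ H.d_b_eq_t_a, H.d_a]

theorem t_mul_b_a (H : IsExampleGenerators S a b c) : S.t (S.mul b a) = 2 := by
  rw [S.t_mul _ _ H.d_b_eq_t_a, H.t_b]

theorem d_c_eq_t_mul_b_a (H : IsExampleGenerators S a b c) : S.d c = S.t (S.mul b a) :=
  H.d_c.trans H.t_mul_b_a.symm

theorem d_inv_a_eq_t_mul_c (H : IsExampleGenerators S a b c) :
    S.d (S.inv a) = S.t (S.mul c (S.mul b a)) := by
  rw [S.d_inv, H.t_a, S.t_mul _ _ H.d_c_eq_t_mul_b_a, H.t_c]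

def z (H : IsExampleGenerators S a b c) : S.Isotropy 0 :=
  ⟨S.mul (S.inv a) (S.mul c (S.mul b a)),
    by rw [S.d_mul _ _ H.d_inv_a_eq_t_mul_c, S.d_mul _ _ H.d_c_eq_t_mul_b_a, H.d_mul_b_a],
    by rw [S.t_mul _ _ H.d_inv_a_eq_t_mul_c, S.t_inv, H.d_a]⟩

theorem act_z (H : IsExampleGenerators S a b c) {μ : Pth exGraph} (hμ : μ.rng = 0) :
    S.act H.z.val μ = S.act (S.inv a) (S.act c (S.act b (S.act a μ))) := by
  have hμ' : μ.rng = S.d (S.mul b a) := hμ.trans H.d_mul_b_a.symm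
  rw [z, S.act_mul _ _ _ H.d_inv_a_eq_t_mul_c (by rwa [S.d_mul _ _ H.d_c_eq_t_mul_b_a]),
    S.act_mul _ _ _ H.d_c_eq_t_mul_b_a hμ', S.act_mul _ _ _ H.d_b_eq_t_a (hμ.trans H.d_a.symm)]

theorem rng_act_a (H : IsExampleGenerators S a b c) {μ : Pth exGraph} (hμ : μ.rng = 0) :
    (S.act a μ).rng = 1 :=
  (S.act_rng _ _ (hμ.trans H.d_a.symm)).trans H.t_a

theorem act_z_e₁_concat (H : IsExampleGenerators S a b c) {μ : Pth exGraph} (hμ : μ.rng = 0) :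
    S.act H.z.val (Pth.concat e₁ μ) = Pth.concat e₃ (S.act a μ) := by
  have ha : (S.act a μ).rng = 1 := H.rng_act_a hμ
  rw [H.act_z (Pth.rng_concat hμ), H.act_a_e₁ μ hμ, H.act_b_e₂ μ hμ, H.act_c_e₅ _ ha,
    ← H.act_a_e₃ _ ha, S.act_inv_act ((Pth.rng_concat ha).trans H.d_a.symm)]

theorem act_z_e₃_concat (H : IsExampleGenerators S a b c) {μ : Pth exGraph} (hμ : μ.rng = 0) :
    S.act H.z.val (Pth.concat e₃ (S.act a μ)) = Pth.concat e₁ (S.act H.z.val μ) := by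
  have ha : (S.act a μ).rng = 1 := H.rng_act_a hμ
  have hb : (S.act b (S.act a μ)).rng = 2 :=
    (S.act_rng _ _ (ha.trans H.d_b.symm)).trans H.t_b
  have hc : (S.act c (S.act b (S.act a μ))).rng = 1 :=
    (S.act_rng _ _ (hb.trans H.d_c.symm)).trans H.t_c
  have hinv : (S.act (S.inv a) (S.act c (S.act b (S.act a μ)))).rng = 0 := by
    rw [S.act_rng _ _ (by rw [hc, S.d_inv, H.t_a]), S.t_inv, H.d_a]
  rw [H.act_z (Pth.rng_concat ha), H.act_a_e₃ _ ha, H.act_b_e₆ _ hb, H.act_c_e₄ _ hc,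
    ← H.act_a_e₁ _ hinv, S.act_inv_act ((Pth.rng_concat hinv).trans H.d_a.symm), H.act_z hμ]

theorem fixesWithRestriction_z_sq (H : IsExampleGenerators S a b c) :
    S.FixesWithRestriction 0 (H.z * H.z) H.z := fun μ hμ => by
  rw [act_isotropy_mul H.z H.z (Pth.rng_concat hμ), H.act_z_e₁_concat hμ,
    H.act_z_e₃_concat hμ]

theorem act_z_e₁ (H : IsExampleGenerators S a b c) : S.act H.z.val e₁ = e₃ := by
  have h := H.act_z_e₁_concat (μ := Pth.ofVertex 0) rfl
  have hv : S.act a (Pth.ofVertex 0) = Pth.ofVertex 1 := by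
    have := S.act_vertex a
    rwa [H.d_a, H.t_a] at this
  rwa [hv, show Pth.concat e₁ (Pth.ofVertex 0) = e₁ from Pth.concat_ofVertex_src _,
    show Pth.concat e₃ (Pth.ofVertex 1) = e₃ from Pth.concat_ofVertex_src _] at h

theorem not_isOfFinOrder_z (H : IsExampleGenerators S a b c) : ¬IsOfFinOrder H.z :=
  not_isOfFinOrder_of_fixesWithRestriction_sq rfl rfl H.fixesWithRestriction_z_sq
    (by rw [H.act_z_e₁]; exact fun h => absurd (congrArg Pth.edges h) (by decide))

def transversal (H : IsExampleGenerators S a b c) : S.Transversal 0 where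
  arrow := ![S.unit 0, a, S.mul b a]
  d_arrow v := by fin_cases v <;> simp [S.d_unit, H.d_a, H.d_mul_b_a]
  t_arrow v := by fin_cases v <;> simp [S.t_unit, H.t_a, H.t_mul_b_a]

theorem retract_mem_zpowers (H : IsExampleGenerators S a b c)
    (hgen : ∀ P : α → Prop, P a → P b → P c → (∀ v : Fin 3, P (S.unit v)) →
      (∀ x, P x → P (S.inv x)) →
      (∀ x y, P x → P y → S.d x = S.t y → P (S.mul x y)) → ∀ x, P x)
    (x : α) : H.transversal.retract x ∈ Subgroup.zpowers H.z := by
  refine hgen (fun x => H.transversal.retract x ∈ Subgroup.zpowers H.z) ?_ ?_ ?_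
    (fun v => ?_) (fun x hx => ?_) (fun x y hx hy hxy => ?_) x
  · rw [Transversal.retract_eq_one _ (by rw [H.d_a, H.t_a]; exact S.mul_unit_of_eq H.d_a)]
    exact one_mem _
  · rw [Transversal.retract_eq_one _ (by rw [H.d_b, H.t_b]; rfl)]
    exact one_mem _
  · have hc : H.transversal.retract c = H.z :=
      Isotropy.ext (by rw [Transversal.retract_val, H.d_c, H.t_c]; rfl)
    rw [hc]
    exact Subgroup.mem_zpowers _
  · rw [Transversal.retract_unit]
    exact one_mem _
  · rw [Transversal.retract_inv]
    exact inv_mem hx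
  · rw [Transversal.retract_mul _ hxy]
    exact mul_mem hx hy

end IsExampleGenerators

end Example

theorem example_isotropy_group_is_Z_general {α : Type*}
    (S : SelfSimilar exGraph α) (a b c : α)
    (hda : S.d a = 0) (hta : S.t a = 1) (hdb : S.d b = 1) (htb : S.t b = 2)
    (hdc : S.d c = 2) (htc : S.t c = 1)
    (ha1 : ∀ μ : Pth exGraph, μ.rng = 0 →
        S.act a ((Pth.ofEdge (E := exGraph) 0).concat μ) =
          (Pth.ofEdge (E := exGraph) 1).concat μ)
    (ha3 : ∀ μ : Pth exGraph, μ.rng = 1 →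
        S.act a ((Pth.ofEdge (E := exGraph) 2).concat μ) =
          (Pth.ofEdge (E := exGraph) 5).concat (S.act b μ))
    (hb2 : ∀ μ : Pth exGraph, μ.rng = 0 →
        S.act b ((Pth.ofEdge (E := exGraph) 1).concat μ) =
          (Pth.ofEdge (E := exGraph) 4).concat (S.act a μ))
    (hb6 : ∀ μ : Pth exGraph, μ.rng = 2 →
        S.act b ((Pth.ofEdge (E := exGraph) 5).concat μ) =
          (Pth.ofEdge (E := exGraph) 3).concat (S.act c μ))
    (hc4 : ∀ μ : Pth exGraph, μ.rng = 1 →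
        S.act c ((Pth.ofEdge (E := exGraph) 3).concat μ) =
          (Pth.ofEdge (E := exGraph) 1).concat (S.act (S.inv a) μ))
    (hc5 : ∀ μ : Pth exGraph, μ.rng = 1 →
        S.act c ((Pth.ofEdge (E := exGraph) 4).concat μ) =
          (Pth.ofEdge (E := exGraph) 5).concat (S.act b μ))
    (hgen : ∀ P : α → Prop, P a → P b → P c → (∀ v : Fin 3, P (S.unit v)) →
        (∀ x, P x → P (S.inv x)) →
        (∀ x y, P x → P y → S.d x = S.t y → P (S.mul x y)) → ∀ x, P x) :
    ∃ f : ℤ → α,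
      f 1 = S.mul (S.inv a) (S.mul c (S.mul b a)) ∧
      f 0 = S.unit 0 ∧
      (∀ m n : ℤ, f (m + n) = S.mul (f m) (f n)) ∧
      (∀ n : ℤ, S.d (f n) = 0 ∧ S.t (f n) = 0) ∧
      Function.Injective f ∧
      (∀ n : ℤ, n ≠ 0 → f n ≠ S.unit 0) ∧
      (∀ g : α, S.d g = 0 → S.t g = 0 → ∃ n : ℤ, g = f n) := by
  have H : IsExampleGenerators S a b c :=
    ⟨hda, hta, hdb, htb, hdc, htc, ha1, ha3, hb2, hb6, hc4, hc5⟩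
  have hinj : Function.Injective fun n : ℤ => H.z ^ n :=
    injective_zpow_iff_not_isOfFinOrder.2 H.not_isOfFinOrder_z
  have hzero : (H.z ^ (0 : ℤ)).val = S.unit 0 := congrArg VGroupoid.Isotropy.val (zpow_zero H.z)
  refine ⟨fun n => (H.z ^ n).val, congrArg VGroupoid.Isotropy.val (zpow_one H.z), hzero,
    fun m n => congrArg VGroupoid.Isotropy.val (zpow_add H.z m n),
    fun n => ⟨(H.z ^ n).d_val, (H.z ^ n).t_val⟩, VGroupoid.Isotropy.val_injective.comp hinj,
    fun n hn h => hn (hinj (VGroupoid.Isotropy.ext (h.trans hzero.symm))), fun g hd ht => ?_⟩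
  obtain ⟨n, hn⟩ := Subgroup.mem_zpowers_iff.1 (H.retract_mem_zpowers hgen g)
  exact ⟨n, (H.transversal.retract_of_mem hd ht rfl).symm.trans (congrArg _ hn.symm)⟩

/-- In the example self-similar groupoid action `(G, E)` generated
by the partial isomorphisms `a, b, c` (generation is expressed by the induction
principle `hgen`), the isotropy group `G_u^u = {g ∈ G : d g = t g = u}` is infinite
cyclic, generated by `a⁻¹cba`: there is a map `f : ℤ → G` with `f 1 = a⁻¹cba`,
`f 0 = id_u`, `f (m + n) = f m · f n`, taking values in `G_u^u`, which is injective
(in particular `(a⁻¹cba)^n ≠ id_u` for every `n ≠ 0`) and surjective onto `G_u^u`;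
so `G_u^u ≅ ℤ`. -/
theorem example_isotropy_group_is_Z {α : Type*}
    (S : SelfSimilar exGraph α) (a b c : α)
    (hda : S.d a = 0) (hta : S.t a = 1) (hdb : S.d b = 1) (htb : S.t b = 2)
    (hdc : S.d c = 2) (htc : S.t c = 1)
    (ha1 : ∀ μ : Pth exGraph, μ.rng = 0 →
        S.act a ((Pth.ofEdge (E := exGraph) 0).concat μ) =
          (Pth.ofEdge (E := exGraph) 1).concat μ)
    (ha3 : ∀ μ : Pth exGraph, μ.rng = 1 →
        S.act a ((Pth.ofEdge (E := exGraph) 2).concat μ) =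
          (Pth.ofEdge (E := exGraph) 5).concat (S.act b μ))
    (hb2 : ∀ μ : Pth exGraph, μ.rng = 0 →
        S.act b ((Pth.ofEdge (E := exGraph) 1).concat μ) =
          (Pth.ofEdge (E := exGraph) 4).concat (S.act a μ))
    (hb6 : ∀ μ : Pth exGraph, μ.rng = 2 →
        S.act b ((Pth.ofEdge (E := exGraph) 5).concat μ) =
          (Pth.ofEdge (E := exGraph) 3).concat (S.act c μ))
    (hc4 : ∀ μ : Pth exGraph, μ.rng = 1 →
        S.act c ((Pth.ofEdge (E := exGraph) 3).concat μ) =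
          (Pth.ofEdge (E := exGraph) 1).concat (S.act (S.inv a) μ))
    (hc5 : ∀ μ : Pth exGraph, μ.rng = 1 →
        S.act c ((Pth.ofEdge (E := exGraph) 4).concat μ) =
          (Pth.ofEdge (E := exGraph) 5).concat (S.act b μ))
    (hra1 : S.res a 0 = S.unit 0) (hra3 : S.res a 2 = b)
    (hrb2 : S.res b 1 = a) (hrb6 : S.res b 5 = c)
    (hrc4 : S.res c 3 = S.inv a) (hrc5 : S.res c 4 = b)
    (hgen : ∀ P : α → Prop, P a → P b → P c → (∀ v : Fin 3, P (S.unit v)) →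
        (∀ x, P x → P (S.inv x)) →
        (∀ x y, P x → P y → S.d x = S.t y → P (S.mul x y)) → ∀ x, P x) :
    ∃ f : ℤ → α,
      f 1 = S.mul (S.inv a) (S.mul c (S.mul b a)) ∧
      f 0 = S.unit 0 ∧
      (∀ m n : ℤ, f (m + n) = S.mul (f m) (f n)) ∧
      (∀ n : ℤ, S.d (f n) = 0 ∧ S.t (f n) = 0) ∧
      Function.Injective f ∧
      (∀ n : ℤ, n ≠ 0 → f n ≠ S.unit 0) ∧
      (∀ g : α, S.d g = 0 → S.t g = 0 → ∃ n : ℤ, g = f n) :=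
  example_isotropy_group_is_Z_general S a b c hda hta hdb htb hdc htc ha1 ha3 hb2 hb6 hc4 hc5 hgen
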